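/- arXiv:2309.04236 — 2 statements merged into one kernel-verified Lean document; each statement's English description precedes it below -/
import Mathlib

section
/- Let H and F be separable Hilbert spaces, let S_n be a positive bounded linear operator on H, let P be the orthogonal projection of H onto the closure of the range of S_n, and let μ > 0. Then for every bounded linear operator G : F → H, ‖(I − P) G‖ ≤ μ^{1/2} ‖(S_n + μI)^{-1/2} G‖. -/
/-!
With `B = Sₙ + μ`, factor `(1 - P) G = ((1 - P) B^{1/2}) (B^{-1/2} G)`. Since the range of `Sₙ`
lies in the range of `P`, `(1 - P) Sₙ = 0`, so `((1 - P) B^{1/2}) ((1 - P) B^{1/2})⋆ =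
(1 - P) B (1 - P) = μ (1 - P)`, and the C⋆-identity gives `‖(1 - P) B^{1/2}‖ ≤ √μ`.
-/

open ContinuousLinearMap

/-- Real powers of a (positive) bounded operator on a real Hilbert space, defined via the
continuous functional calculus. -/
noncomputable def opow {E : Type*} [NormedAddCommGroup E] [InnerProductSpace ℝ E]
    [CompleteSpace E]
    [ContinuousFunctionalCalculus ℝ (E →L[ℝ] E) (IsSelfAdjoint : (E →L[ℝ] E) → Prop)]
    (A : E →L[ℝ] E) (t : ℝ) : E →L[ℝ] E :=
  cfc (fun x : ℝ => x ^ t) A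

theorem IsStarProjection.norm_mul_le_sqrt {A : Type*} [NormedRing A] [StarRing A] [CStarRing A]
    [NormedAlgebra ℝ A] {q r s : A} {μ : ℝ} (hμ : 0 ≤ μ) (hq : IsStarProjection q)
    (hr : IsSelfAdjoint r) (hrr : r * r = s + μ • 1) (hqs : q * s = 0) :
    ‖q * r‖ ≤ √μ := by
  have hsq : (q * r) * star (q * r) = μ • q := by
    rw [star_mul, hr.star_eq, hq.isSelfAdjoint.star_eq, mul_assoc, ← mul_assoc r, hrr,
      ← mul_assoc, mul_add, hqs, zero_add, mul_smul_comm, mul_one, smul_mul_assoc,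
      hq.isIdempotentElem.eq]
  have : ‖q * r‖ * ‖q * r‖ ≤ μ := by
    rw [← CStarRing.norm_self_mul_star, hsq, norm_smul, Real.norm_of_nonneg hμ]
    exact mul_le_of_le_one_right hμ (hq.norm_le q)
  exact Real.le_sqrt_of_sq_le (by nlinarith)

section opow

variable {E : Type*} [NormedAddCommGroup E] [InnerProductSpace ℝ E] [CompleteSpace E]
  [ContinuousFunctionalCalculus ℝ (E →L[ℝ] E) (IsSelfAdjoint : (E →L[ℝ] E) → Prop)]
  {A : E →L[ℝ] E}

theorem opow_add (hA : ∀ x ∈ spectrum ℝ A, 0 < x) (s t : ℝ) :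
    opow A (s + t) = opow A s * opow A t := by
  have hcont (u : ℝ) : ContinuousOn (fun x : ℝ => x ^ u) (spectrum ℝ A) := fun x hx =>
    (Real.continuousAt_rpow_const x u (Or.inl (hA x hx).ne')).continuousWithinAt
  rw [opow, opow, opow, ← cfc_mul _ _ A (hcont s) (hcont t)]
  exact cfc_congr fun x hx => Real.rpow_add (hA x hx) s t

theorem opow_zero (hA : IsSelfAdjoint A) : opow A 0 = 1 := by
  simp only [opow, Real.rpow_zero, cfc_const_one ℝ A hA]

theorem opow_one (hA : IsSelfAdjoint A) : opow A 1 = A := by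
  simp only [opow, Real.rpow_one, cfc_id' ℝ A hA]

theorem isSelfAdjoint_opow (t : ℝ) : IsSelfAdjoint (opow A t) := cfc_predicate _ A

end opow

theorem ContinuousLinearMap.IsPositive.le_of_mem_spectrum_add_smul_one {E : Type*}
    [NormedAddCommGroup E] [InnerProductSpace ℝ E] [CompleteSpace E] {T : E →L[ℝ] E}
    (hT : T.IsPositive) (μ : ℝ) : ∀ x ∈ spectrum ℝ (T + μ • 1), μ ≤ x := by
  rw [← Algebra.algebraMap_eq_smul_one, add_comm, ← spectrum.singleton_add_eq]
  rintro _ ⟨_, rfl, y, hy, rfl⟩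
  exact le_add_of_nonneg_right (SpectrumRestricts.nnreal_iff.mp hT.spectrumRestricts y hy)

theorem ContinuousLinearMap.comp_eq_right_of_range_le {E F : Type*} [NormedAddCommGroup E]
    [NormedAddCommGroup F] [NormedSpace ℝ E] [NormedSpace ℝ F] {P : E →L[ℝ] E} {T : F →L[ℝ] E}
    (hP : P ∘L P = P) (hT : LinearMap.range (T : F →ₗ[ℝ] E) ≤ LinearMap.range (P : E →ₗ[ℝ] E)) :
    P ∘L T = T := by
  have hP' : IsIdempotentElem (P : E →ₗ[ℝ] E) := congrArg ((↑) : (E →L[ℝ] E) → E →ₗ[ℝ] E) hP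
  exact ContinuousLinearMap.coe_injective
    ((LinearMap.IsIdempotentElem.comp_eq_right_iff hP' _).mpr hT)

theorem stmt10_general
    {H F : Type*}
    [NormedAddCommGroup H] [InnerProductSpace ℝ H] [CompleteSpace H]
    [NormedAddCommGroup F] [InnerProductSpace ℝ F]
    [ContinuousFunctionalCalculus ℝ (H →L[ℝ] H) (IsSelfAdjoint : (H →L[ℝ] H) → Prop)]
    (Sn : H →L[ℝ] H) (hSn : Sn.IsPositive)
    (P : H →L[ℝ] H) (hPsa : IsSelfAdjoint P) (hPidem : P ∘L P = P)
    (hPrange : LinearMap.range (P : H →ₗ[ℝ] H) = (LinearMap.range (Sn : H →ₗ[ℝ] H)).topologicalClosure)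
    (mu : ℝ) (hmu : 0 < mu)
    (G : F →L[ℝ] H) :
    ‖(1 - P) ∘L G‖ ≤ mu ^ (1 / 2 : ℝ) * ‖opow (Sn + mu • 1) (-(1 / 2)) ∘L G‖ := by
  set B := Sn + mu • 1
  have hB : ∀ x ∈ spectrum ℝ B, 0 < x := fun x hx =>
    hmu.trans_le (hSn.le_of_mem_spectrum_add_smul_one mu x hx)
  have hBsa : IsSelfAdjoint B := hSn.isSelfAdjoint.add ((IsSelfAdjoint.all mu).smul (.one _))
  have hsqrt : opow B (1 / 2) * opow B (1 / 2) = B := by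
    rw [← opow_add hB, add_halves, opow_one hBsa]
  have hinv : opow B (1 / 2) * opow B (-(1 / 2)) = 1 := by
    rw [← opow_add hB, add_neg_cancel, opow_zero hBsa]
  have hPSn : P ∘L Sn = Sn := comp_eq_right_of_range_le hPidem
    (hPrange ▸ Submodule.le_topologicalClosure _)
  have hQSn : (1 - P) * Sn = 0 := by rw [sub_mul, one_mul, mul_def, hPSn, sub_self]
  have hQ : IsStarProjection (1 - P) := (IsStarProjection.mk hPidem hPsa).one_sub
  calc ‖(1 - P) ∘L G‖ = ‖((1 - P) * opow B (1 / 2)) ∘L (opow B (-(1 / 2)) ∘L G)‖ := by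
        rw [mul_def, comp_assoc, ← comp_assoc _ _ G, ← mul_def, hinv, one_def, id_comp]
    _ ≤ ‖(1 - P) * opow B (1 / 2)‖ * ‖opow B (-(1 / 2)) ∘L G‖ := opNorm_comp_le _ _
    _ ≤ mu ^ (1 / 2 : ℝ) * ‖opow B (-(1 / 2)) ∘L G‖ := by
        gcongr
        rw [← Real.sqrt_eq_rpow]
        exact hQ.norm_mul_le_sqrt hmu.le (isSelfAdjoint_opow _) hsqrt hQSn

/-- `‖(I − P)G‖ ≤ μ^{1/2} ‖(S_n + μI)^{-1/2} G‖` for the orthogonal projection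
`P` onto the closure of the range of the positive operator `S_n`. -/
theorem stmt10
    {H F : Type*}
    [NormedAddCommGroup H] [InnerProductSpace ℝ H] [CompleteSpace H]
    [TopologicalSpace.SeparableSpace H]
    [NormedAddCommGroup F] [InnerProductSpace ℝ F] [CompleteSpace F]
    [TopologicalSpace.SeparableSpace F]
    [ContinuousFunctionalCalculus ℝ (H →L[ℝ] H) (IsSelfAdjoint : (H →L[ℝ] H) → Prop)]
    (Sn : H →L[ℝ] H) (hSn : Sn.IsPositive)
    (P : H →L[ℝ] H) (hPsa : IsSelfAdjoint P) (hPidem : P ∘L P = P)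
    (hPrange : LinearMap.range (P : H →ₗ[ℝ] H) = (LinearMap.range (Sn : H →ₗ[ℝ] H)).topologicalClosure)
    (mu : ℝ) (hmu : 0 < mu)
    (G : F →L[ℝ] H) :
    ‖(1 - P) ∘L G‖ ≤ mu ^ (1 / 2 : ℝ) * ‖opow (Sn + mu • 1) (-(1 / 2)) ∘L G‖ :=
  stmt10_general Sn hSn P hPsa hPidem hPrange mu hmu G
end

section
/- Let H be a real separable Hilbert space, let T and S be positive bounded linear operators on H, and let λ > 0. If ‖(T + λI)^{-1/2}(T − S)(T + λI)^{-1/2}‖ ≤ 1/4, then ‖(S + λI)^{-1/2}(T − S)(S + λI)^{-1/2}‖ ≤ 1/3. -/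
open ContinuousLinearMap

/-!
For a self-adjoint `C` and an invertible positive `N`, the bound
`‖N^{-1/2} C N^{-1/2}‖ ≤ c` is equivalent to the quadratic-form bound `|⟪C f, f⟫| ≤ c ⟪N f, f⟫`:
substitute `f = N^{-1/2} g` and use that the norm of a self-adjoint operator is the supremum of
its Rayleigh quotient. With `C = T - S` we have `S + λ = (T + λ) - C`, so the hypothesis gives
`⟪(S + λ) f, f⟫ ≥ (3/4) ⟪(T + λ) f, f⟫` and hence `|⟪C f, f⟫| ≤ (1/4)(4/3) ⟪(S + λ) f, f⟫`.
-/

open scoped RealInnerProductSpace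

namespace ContinuousLinearMap

variable {H : Type*} [NormedAddCommGroup H] [InnerProductSpace ℝ H] [CompleteSpace H]

theorem norm_le_iff_forall_abs_inner_self_le {B : H →L[ℝ] H} (hB : IsSelfAdjoint B) {c : ℝ}
    (hc : 0 ≤ c) : ‖B‖ ≤ c ↔ ∀ x, |⟪B x, x⟫| ≤ c * ‖x‖ ^ 2 := by
  constructor
  · intro h x
    calc |⟪B x, x⟫| ≤ ‖B x‖ * ‖x‖ := abs_real_inner_le_norm _ _
      _ ≤ ‖B‖ * ‖x‖ * ‖x‖ := by gcongr; exact B.le_opNorm x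
      _ ≤ c * ‖x‖ ^ 2 := by rw [mul_assoc, ← sq]; gcongr
  · intro h
    rw [B.norm_eq_iSup_rayleighQuotient hB.isSymmetric]
    refine ciSup_le fun x => ?_
    rcases eq_or_ne x 0 with rfl | hx
    · simpa using hc
    · rw [rayleighQuotient, reApplyInnerSelf_apply, abs_div, abs_sq,
        div_le_iff₀ (by positivity)]
      simpa using h x

theorem IsPositive.spectrum_add_smul_one_pos {A : H →L[ℝ] H} (hA : A.IsPositive) {lam : ℝ}
    (hlam : 0 < lam) : ∀ x ∈ spectrum ℝ (A + lam • 1), 0 < x := by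
  rw [← Algebra.algebraMap_eq_smul_one, ← spectrum.add_singleton_eq]
  rintro _ ⟨a, ha, _, rfl, rfl⟩
  linarith [SpectrumRestricts.nnreal_iff.mp hA.spectrumRestricts a ha]

end ContinuousLinearMap

section

variable {H : Type*} [NormedAddCommGroup H] [InnerProductSpace ℝ H] [CompleteSpace H]
variable [ContinuousFunctionalCalculus ℝ (H →L[ℝ] H) (IsSelfAdjoint : (H →L[ℝ] H) → Prop)]

theorem isSelfAdjoint_opow_s19 (N : H →L[ℝ] H) (t : ℝ) : IsSelfAdjoint (opow N t) :=
  cfc_predicate _ N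

theorem inner_opow_left (N : H →L[ℝ] H) (t : ℝ) (x y : H) :
    ⟪opow N t x, y⟫ = ⟪x, opow N t y⟫ :=
  (isSelfAdjoint_opow_s19 N t).isSymmetric x y

variable {N : H →L[ℝ] H}

theorem opow_apply_opow_apply (hpos : ∀ x ∈ spectrum ℝ N, 0 < x)
    (s t : ℝ) (x : H) : opow N s (opow N t x) = opow N (s + t) x := by
  have hcont (u : ℝ) : ContinuousOn (fun x : ℝ => x ^ u) (spectrum ℝ N) :=
    continuousOn_id.rpow_const fun x hx => Or.inl (hpos x hx).ne'
  rw [← mul_apply_eq_comp, opow, opow, opow, ← cfc_mul _ _ N (hcont s) (hcont t)]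
  exact congrArg (· x) (cfc_congr fun x hx => (Real.rpow_add (hpos x hx) s t).symm)

theorem opow_zero_s19 (hN : IsSelfAdjoint N) : opow N 0 = 1 := by
  simp only [opow, Real.rpow_zero, cfc_const_one ℝ N hN]

theorem opow_one_s19 (hN : IsSelfAdjoint N) : opow N 1 = N := by
  simp only [opow, Real.rpow_one, cfc_id' ℝ N hN]

theorem inner_self_eq_norm_opow_half_sq (hN : IsSelfAdjoint N)
    (hpos : ∀ x ∈ spectrum ℝ N, 0 < x) (f : H) : ⟪N f, f⟫ = ‖opow N (1 / 2) f‖ ^ 2 := by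
  conv_lhs => rw [← opow_one_s19 hN, ← add_halves (1 : ℝ), ← opow_apply_opow_apply hpos]
  rw [inner_opow_left, real_inner_self_eq_norm_sq]

theorem norm_opow_neg_half_conj_le_iff {C : H →L[ℝ] H} (hN : IsSelfAdjoint N)
    (hpos : ∀ x ∈ spectrum ℝ N, 0 < x) (hC : IsSelfAdjoint C) {c : ℝ} (hc : 0 ≤ c) :
    ‖opow N (-(1 / 2)) ∘L C ∘L opow N (-(1 / 2))‖ ≤ c ↔
      ∀ f, |⟪C f, f⟫| ≤ c * ⟪N f, f⟫ := by
  have hPQ (f : H) : opow N (-(1 / 2)) (opow N (1 / 2) f) = f := by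
    rw [opow_apply_opow_apply hpos, neg_add_cancel, opow_zero_s19 hN, one_apply_eq_self]
  have hQP (g : H) : opow N (1 / 2) (opow N (-(1 / 2)) g) = g := by
    rw [opow_apply_opow_apply hpos, add_neg_cancel, opow_zero_s19 hN, one_apply_eq_self]
  have hB : IsSelfAdjoint (opow N (-(1 / 2)) ∘L C ∘L opow N (-(1 / 2))) :=
    hC.conjugate_self (isSelfAdjoint_opow_s19 N _)
  rw [norm_le_iff_forall_abs_inner_self_le hB hc, (Function.LeftInverse.surjective hQP).forall]
  refine forall_congr' fun f => ?_
  rw [comp_apply, comp_apply, inner_opow_left, hPQ, inner_self_eq_norm_opow_half_sq hN hpos]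

end

theorem stmt19_general
    {H : Type*} [NormedAddCommGroup H] [InnerProductSpace ℝ H] [CompleteSpace H]
    [ContinuousFunctionalCalculus ℝ (H →L[ℝ] H) (IsSelfAdjoint : (H →L[ℝ] H) → Prop)]
    (T S : H →L[ℝ] H) (hT : T.IsPositive) (hS : S.IsPositive)
    (lam : ℝ) (hlam : 0 < lam)
    (hR : ‖opow (T + lam • 1) (-(1 / 2)) ∘L (T - S) ∘L opow (T + lam • 1) (-(1 / 2))‖
      ≤ 1 / 4) :
    ‖opow (S + lam • 1) (-(1 / 2)) ∘L (T - S) ∘L opow (S + lam • 1) (-(1 / 2))‖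
      ≤ 1 / 3 := by
  have hTlam := hT.add (isPositive_one.smul_of_nonneg hlam.le)
  have hSlam := hS.add (isPositive_one.smul_of_nonneg hlam.le)
  have hC : IsSelfAdjoint (T - S) := hT.isSelfAdjoint.sub hS.isSelfAdjoint
  rw [norm_opow_neg_half_conj_le_iff hTlam.isSelfAdjoint (hT.spectrum_add_smul_one_pos hlam) hC
    (by norm_num)] at hR
  rw [norm_opow_neg_half_conj_le_iff hSlam.isSelfAdjoint (hS.spectrum_add_smul_one_pos hlam) hC
    (by norm_num)]
  intro f
  have hsplit : ⟪(S + lam • 1) f, f⟫ = ⟪(T + lam • 1) f, f⟫ - ⟪(T - S) f, f⟫ := by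
    simp only [add_apply, sub_apply, inner_add_left, inner_sub_left]
    ring
  rw [hsplit]
  have hRf := abs_le.mp (hR f)
  rw [abs_le]
  constructor <;> linarith

/-- `R_{D,λ} ≤ 1/4` implies
`‖(S+λI)^{-1/2}(T−S)(S+λI)^{-1/2}‖ ≤ 1/3`. -/
theorem stmt19
    {H : Type*} [NormedAddCommGroup H] [InnerProductSpace ℝ H] [CompleteSpace H]
    [TopologicalSpace.SeparableSpace H]
    [ContinuousFunctionalCalculus ℝ (H →L[ℝ] H) (IsSelfAdjoint : (H →L[ℝ] H) → Prop)]
    (T S : H →L[ℝ] H) (hT : T.IsPositive) (hS : S.IsPositive)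
    (lam : ℝ) (hlam : 0 < lam)
    (hR : ‖opow (T + lam • 1) (-(1 / 2)) ∘L (T - S) ∘L opow (T + lam • 1) (-(1 / 2))‖
      ≤ 1 / 4) :
    ‖opow (S + lam • 1) (-(1 / 2)) ∘L (T - S) ∘L opow (S + lam • 1) (-(1 / 2))‖
      ≤ 1 / 3 :=
  stmt19_general T S hT hS lam hlam hR
end
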